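/- For any measurement assemblage {B_{a|x}} on ℂ^d and any density matrix ρ, the steering robustness of the state assemblage {ρ^{1/2} B_{a|x} ρ^{1/2}} is at most the incompatibility robustness of {B_{a|x}}: SR(ρ^{1/2} B ρ^{1/2}) ≤ IR(B). -/

import Mathlib

open Matrix Kronecker BigOperators ComplexOrder

noncomputable section

/-- A density matrix: positive semidefinite with unit trace. -/
def IsDensity {d : ℕ} (ρ : Matrix (Fin d) (Fin d) ℂ) : Prop :=
  ρ.PosSemidef ∧ ρ.trace = 1

/-- A POVM: positive semidefinite effects summing to the identity. -/
def IsPOVM {d nl : ℕ} (G : Fin nl → Matrix (Fin d) (Fin d) ℂ) : Prop :=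
  (∀ l, (G l).PosSemidef) ∧ ∑ l, G l = 1

/-- A measurement assemblage: for each setting `x`, a POVM `a ↦ M x a`. -/
def IsMA {d na nx : ℕ} (M : Fin nx → Fin na → Matrix (Fin d) (Fin d) ℂ) : Prop :=
  (∀ x a, (M x a).PosSemidef) ∧ ∀ x, ∑ a, M x a = 1

/-- Joint measurability: `M x a = ∑ λ p(a|x,λ) G λ` for a parent POVM `G`. -/
def JM {d na nx : ℕ} (M : Fin nx → Fin na → Matrix (Fin d) (Fin d) ℂ) : Prop :=
  ∃ (nl : ℕ) (G : Fin nl → Matrix (Fin d) (Fin d) ℂ)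
    (p : Fin nx → Fin na → Fin nl → ℝ),
    IsPOVM G ∧ (∀ x a l, 0 ≤ p x a l) ∧ (∀ x l, ∑ a, p x a l = 1) ∧
    ∀ x a, M x a = ∑ l, (p x a l : ℂ) • G l

/-- A state assemblage: PSD elements with an `x`-independent reduced density matrix. -/
def IsSA {d na nx : ℕ} (σ : Fin nx → Fin na → Matrix (Fin d) (Fin d) ℂ) : Prop :=
  (∀ x a, (σ x a).PosSemidef) ∧
  ∃ ρ : Matrix (Fin d) (Fin d) ℂ, IsDensity ρ ∧ ∀ x, ∑ a, σ x a = ρ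

/-- Local-hidden-state model: `σ x a = ∑ λ q(λ) p(a|x,λ) ρ_λ`. -/
def LHS {d na nx : ℕ} (σ : Fin nx → Fin na → Matrix (Fin d) (Fin d) ℂ) : Prop :=
  ∃ (nl : ℕ) (q : Fin nl → ℝ) (p : Fin nx → Fin na → Fin nl → ℝ)
    (ρ : Fin nl → Matrix (Fin d) (Fin d) ℂ),
    (∀ l, 0 ≤ q l) ∧ (∑ l, q l = 1) ∧
    (∀ x a l, 0 ≤ p x a l) ∧ (∀ x l, ∑ a, p x a l = 1) ∧
    (∀ l, IsDensity (ρ l)) ∧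
    ∀ x a, σ x a = ∑ l, ((q l * p x a l : ℝ) : ℂ) • ρ l

/-- Incompatibility robustness. -/
def IR {d na nx : ℕ} (B : Fin nx → Fin na → Matrix (Fin d) (Fin d) ℂ) : ℝ :=
  sInf {t : ℝ | 0 ≤ t ∧ ∃ N, IsMA N ∧
    JM (fun x a => (((1 + t : ℝ))⁻¹ : ℂ) • (B x a + (t : ℂ) • N x a))}

/-- Steering robustness. -/
def SR {d na nx : ℕ} (σ : Fin nx → Fin na → Matrix (Fin d) (Fin d) ℂ) : ℝ :=
  sInf {t : ℝ | 0 ≤ t ∧ ∃ ξ, IsSA ξ ∧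
    LHS (fun x a => (((1 + t : ℝ))⁻¹ : ℂ) • (σ x a + (t : ℂ) • ξ x a))}

/-- Incompatible weight. -/
def IW {d na nx : ℕ} (B : Fin nx → Fin na → Matrix (Fin d) (Fin d) ℂ) : ℝ :=
  sInf {t : ℝ | 0 ≤ t ∧ t ≤ 1 ∧ ∃ N O, IsMA N ∧ JM O ∧
    ∀ x a, B x a = (t : ℂ) • N x a + ((1 - t : ℝ) : ℂ) • O x a}

/-- Steerable weight. -/
def SW {d na nx : ℕ} (σ : Fin nx → Fin na → Matrix (Fin d) (Fin d) ℂ) : ℝ :=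
  sInf {t : ℝ | 0 ≤ t ∧ t ≤ 1 ∧ ∃ ξ τ, IsSA ξ ∧ LHS τ ∧
    ∀ x a, σ x a = (t : ℂ) • ξ x a + ((1 - t : ℝ) : ℂ) • τ x a}

/-- Positive map on matrices. -/
def PosMap {d : ℕ} (E : Matrix (Fin d) (Fin d) ℂ →ₗ[ℂ] Matrix (Fin d) (Fin d) ℂ) : Prop :=
  ∀ X, X.PosSemidef → (E X).PosSemidef

/-- Trace-nonincreasing on PSD matrices. -/
def TNI {d : ℕ} (E : Matrix (Fin d) (Fin d) ℂ →ₗ[ℂ] Matrix (Fin d) (Fin d) ℂ) : Prop :=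
  ∀ X : Matrix (Fin d) (Fin d) ℂ, X.PosSemidef → (E X).trace.re ≤ X.trace.re

/-- `Ed` is the Hilbert–Schmidt adjoint of `E`. -/
def IsAdjoint {d : ℕ} (E Ed : Matrix (Fin d) (Fin d) ℂ →ₗ[ℂ] Matrix (Fin d) (Fin d) ℂ) : Prop :=
  ∀ X Y, ((E X)ᴴ * Y).trace = (Xᴴ * (Ed Y)).trace

/-- Partial trace over the first tensor factor. -/
def ptraceA {d d' : ℕ} (M : Matrix (Fin d × Fin d') (Fin d × Fin d') ℂ) :
    Matrix (Fin d') (Fin d') ℂ :=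
  Matrix.of fun i j => ∑ k : Fin d, M (k, i) (k, j)

/-- The map `E ⊗ id` acting on bipartite matrices. -/
def tensId {d d' : ℕ} (E : Matrix (Fin d) (Fin d) ℂ →ₗ[ℂ] Matrix (Fin d) (Fin d) ℂ)
    (M : Matrix (Fin d × Fin d') (Fin d × Fin d') ℂ) :
    Matrix (Fin d × Fin d') (Fin d × Fin d') ℂ :=
  Matrix.of fun p q => E (Matrix.of fun i k => M (i, p.2) (k, q.2)) p.1 q.1

/-- The positive semidefinite square root of a positive semidefinite matrix
(restored: `Matrix.PosSemidef.sqrt` was removed from Mathlib; old definition). -/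
def Matrix.PosSemidef.sqrt {d : ℕ} {A : Matrix (Fin d) (Fin d) ℂ} (hA : A.PosSemidef) :
    Matrix (Fin d) (Fin d) ℂ :=
  (hA.1.eigenvectorUnitary : Matrix (Fin d) (Fin d) ℂ) *
    diagonal ((↑) ∘ (fun x : ℝ => Real.sqrt x) ∘ hA.1.eigenvalues) *
    (star hA.1.eigenvectorUnitary : Matrix (Fin d) (Fin d) ℂ)

/-!
Conjugation `M ↦ Kᴴ M K` by a matrix with `tr (Kᴴ K) = 1` (here `K = ρ^{1/2}`) sends measurement
assemblages to state assemblages with reduced state `Kᴴ K`, and sends a jointly measurable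
assemblage with parent POVM `G` to an LHS assemblage with hidden states proportional to `Kᴴ G_λ K`
and weights `tr (Kᴴ G_λ K)`. Since it is linear it commutes with the robustness mixtures, so every
`t` admissible for `IR B` is admissible for `SR (Kᴴ B K)`. The admissible set for `IR B` is
nonempty, hence the infima compare.
-/

namespace Matrix.PosSemidef

variable {d : ℕ} {A : Matrix (Fin d) (Fin d) ℂ}

lemma sqrt_eq_cfc (hA : A.PosSemidef) : hA.sqrt = cfc Real.sqrt A := by
  rw [hA.1.cfc_eq, IsHermitian.cfc, Unitary.conjStarAlgAut_apply]
  rfl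

lemma isHermitian_sqrt (hA : A.PosSemidef) : hA.sqrt.IsHermitian := by
  rw [hA.sqrt_eq_cfc]
  exact cfc_predicate _ _

lemma sqrt_mul_self (hA : A.PosSemidef) : hA.sqrt * hA.sqrt = A := by
  rw [hA.sqrt_eq_cfc, ← cfc_mul _ _ A]
  conv_rhs => rw [← cfc_id' ℝ A hA.1]
  refine cfc_congr fun x hx => ?_
  obtain ⟨i, rfl⟩ := hA.1.spectrum_real_eq_range_eigenvalues ▸ hx
  exact Real.mul_self_sqrt (hA.eigenvalues_nonneg i)

lemma trace_eq_re (hA : A.PosSemidef) : A.trace = (A.trace.re : ℂ) :=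
  Complex.eq_re_of_ofReal_le (r := 0) (by simpa using hA.trace_nonneg)

lemma re_trace_nonneg (hA : A.PosSemidef) : 0 ≤ A.trace.re :=
  (Complex.le_def.mp hA.trace_nonneg).1

/-- When the trace vanishes the matrix is zero and any density matrix `ρ₀` serves. -/
lemma exists_isDensity_smul (hA : A.PosSemidef) {ρ₀ : Matrix (Fin d) (Fin d) ℂ}
    (hρ₀ : IsDensity ρ₀) : ∃ σ, IsDensity σ ∧ A = (A.trace.re : ℂ) • σ := by
  by_cases h : A.trace = 0
  · exact ⟨ρ₀, hρ₀, by simp [hA.trace_eq_zero_iff.mp h]⟩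
  · have hre : (A.trace.re : ℂ) ≠ 0 := hA.trace_eq_re ▸ h
    refine ⟨(A.trace.re : ℂ)⁻¹ • A, ⟨hA.smul (inv_nonneg.mpr ?_), ?_⟩, ?_⟩
    · simpa [← hA.trace_eq_re] using hA.trace_nonneg
    · rw [trace_smul, smul_eq_mul, ← hA.trace_eq_re, inv_mul_cancel₀ h]
    · rw [smul_smul, mul_inv_cancel₀ hre, one_smul]

end Matrix.PosSemidef

section Assemblages

variable {d e na nx : ℕ}

lemma IsMA.posSemidef_one_sub {B : Fin nx → Fin na → Matrix (Fin d) (Fin d) ℂ} (hB : IsMA B)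
    (x : Fin nx) (a : Fin na) : (1 - B x a).PosSemidef := by
  rw [← hB.2 x, ← Finset.sum_erase_add _ _ (Finset.mem_univ a), add_sub_cancel_right]
  exact posSemidef_sum _ fun a' _ => hB.1 x a'

lemma IsMA.card_pos {B : Fin nx → Fin na → Matrix (Fin d) (Fin d) ℂ} (hB : IsMA B) (hd : 0 < d)
    (x : Fin nx) : 0 < na := by
  have : Nonempty (Fin d) := ⟨⟨0, hd⟩⟩
  refine Nat.pos_of_ne_zero fun hna => ?_
  subst hna
  simpa using hB.2 x

lemma JM_smul_one {p : Fin nx → Fin na → ℝ} (hp0 : ∀ x a, 0 ≤ p x a)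
    (hp1 : ∀ x, ∑ a, p x a = 1) : JM fun x a => (p x a : ℂ) • (1 : Matrix (Fin d) (Fin d) ℂ) :=
  ⟨1, fun _ => 1, fun x a _ => p x a, ⟨fun _ => .one, by simp⟩, fun x a _ => hp0 x a,
    fun x _ => hp1 x, fun x a => by simp⟩

lemma IsMA.isSA_conjTranspose_mul_mul {M : Fin nx → Fin na → Matrix (Fin d) (Fin d) ℂ}
    (hM : IsMA M) {K : Matrix (Fin d) (Fin e) ℂ} (hK : (Kᴴ * K).trace = 1) :
    IsSA fun x a => Kᴴ * M x a * K :=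
  ⟨fun x a => (hM.1 x a).conjTranspose_mul_mul_same K, Kᴴ * K,
    ⟨posSemidef_conjTranspose_mul_self K, hK⟩,
    fun x => by dsimp only; rw [← Matrix.sum_mul, ← Matrix.mul_sum, hM.2 x, Matrix.mul_one]⟩

lemma JM.LHS_conjTranspose_mul_mul {M : Fin nx → Fin na → Matrix (Fin d) (Fin d) ℂ}
    (hM : JM M) {K : Matrix (Fin d) (Fin e) ℂ} (hK : (Kᴴ * K).trace = 1) :
    LHS fun x a => Kᴴ * M x a * K := by
  obtain ⟨nl, G, p, hG, hp0, hp1, hMG⟩ := hM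
  have hKG : ∀ l, (Kᴴ * G l * K).PosSemidef := fun l => (hG.1 l).conjTranspose_mul_mul_same K
  choose ρ hρ hGρ using fun l =>
    (hKG l).exists_isDensity_smul (ρ₀ := Kᴴ * K) ⟨posSemidef_conjTranspose_mul_self K, hK⟩
  refine ⟨nl, fun l => (Kᴴ * G l * K).trace.re, p, ρ, fun l => (hKG l).re_trace_nonneg, ?_,
    hp0, hp1, hρ, fun x a => ?_⟩
  · rw [← Complex.re_sum, ← trace_sum, ← Matrix.sum_mul, ← Matrix.mul_sum, hG.2, Matrix.mul_one,
      hK, Complex.one_re]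
  · dsimp only
    rw [hMG, Matrix.mul_sum, Matrix.sum_mul]
    refine Finset.sum_congr rfl fun l _ => ?_
    rw [Matrix.mul_smul, Matrix.smul_mul, Complex.ofReal_mul, mul_comm, ← smul_smul, ← hGρ l]

end Assemblages

section Robustness

variable {d e na nx : ℕ}

def irFeasible (B : Fin nx → Fin na → Matrix (Fin d) (Fin d) ℂ) : Set ℝ :=
  {t | 0 ≤ t ∧ ∃ N, IsMA N ∧
    JM (fun x a => (((1 + t : ℝ))⁻¹ : ℂ) • (B x a + (t : ℂ) • N x a))}

def srFeasible (σ : Fin nx → Fin na → Matrix (Fin d) (Fin d) ℂ) : Set ℝ :=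
  {t | 0 ≤ t ∧ ∃ ξ, IsSA ξ ∧
    LHS (fun x a => (((1 + t : ℝ))⁻¹ : ℂ) • (σ x a + (t : ℂ) • ξ x a))}

lemma irFeasible_subset_srFeasible_conjTranspose_mul_mul
    (B : Fin nx → Fin na → Matrix (Fin d) (Fin d) ℂ) {K : Matrix (Fin d) (Fin e) ℂ}
    (hK : (Kᴴ * K).trace = 1) : irFeasible B ⊆ srFeasible fun x a => Kᴴ * B x a * K := by
  rintro t ⟨ht, N, hN, hJM⟩
  refine ⟨ht, _, hN.isSA_conjTranspose_mul_mul hK, ?_⟩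
  simpa only [Matrix.mul_add, Matrix.add_mul, Matrix.mul_smul, Matrix.smul_mul] using
    hJM.LHS_conjTranspose_mul_mul hK

/-- Mixing `B` with weight `t = na` with the noise `N = (1 - B + 1/na) / na` gives the trivial,
uniformly random measurement. -/
lemma IsMA.irFeasible_nonempty {B : Fin nx → Fin na → Matrix (Fin d) (Fin d) ℂ} (hB : IsMA B)
    (hd : 0 < d) : (irFeasible B).Nonempty := by
  have hna : ∀ x : Fin nx, na ≠ 0 := fun x => (hB.card_pos hd x).ne'
  refine ⟨na, Nat.cast_nonneg _, fun x a => (na : ℂ)⁻¹ • (1 - B x a + (na : ℂ)⁻¹ • 1),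
    ⟨fun x a => ?_, fun x => ?_⟩, ?_⟩
  · have hc : (0 : ℂ) ≤ (na : ℂ)⁻¹ := by positivity
    exact ((hB.posSemidef_one_sub x a).add (PosSemidef.one.smul hc)).smul hc
  · simp only [← Finset.smul_sum, Finset.sum_add_distrib, Finset.sum_sub_distrib, hB.2 x,
      Finset.sum_const, Finset.card_univ, Fintype.card_fin]
    match_scalars
    field_simp [hna x]
    ring
  · convert JM_smul_one (d := d) (p := fun _ _ => (na : ℝ)⁻¹) (fun _ _ => by positivity)
      fun x => ?_ using 1
    · funext x a
      match_scalars <;> field_simp [hna x] <;> ring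
    · simp [hna x]

lemma SR_conjTranspose_mul_mul_le_IR {B : Fin nx → Fin na → Matrix (Fin d) (Fin d) ℂ}
    (hB : IsMA B) {K : Matrix (Fin d) (Fin e) ℂ} (hK : (Kᴴ * K).trace = 1) :
    SR (fun x a => Kᴴ * B x a * K) ≤ IR B := by
  have hd : 0 < d := Nat.pos_of_ne_zero (by rintro rfl; simp at hK)
  exact csInf_le_csInf (t := srFeasible _) (s := irFeasible B) ⟨0, fun _ ht => ht.1⟩
    (hB.irFeasible_nonempty hd) (irFeasible_subset_srFeasible_conjTranspose_mul_mul B hK)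

end Robustness

/-- SR(ρ^{1/2} B ρ^{1/2}) ≤ IR(B). -/
theorem sr_conj_le_ir {d na nx : ℕ}
    (B : Fin nx → Fin na → Matrix (Fin d) (Fin d) ℂ) (hB : IsMA B)
    (ρ : Matrix (Fin d) (Fin d) ℂ) (hρ : ρ.PosSemidef) (hρ1 : ρ.trace = 1) :
    SR (fun x a => hρ.sqrt * B x a * hρ.sqrt) ≤ IR B := by
  have hS : hρ.sqrtᴴ = hρ.sqrt := hρ.isHermitian_sqrt
  simpa only [hS] using
    SR_conjTranspose_mul_mul_le_IR hB (K := hρ.sqrt) (by rw [hS, hρ.sqrt_mul_self, hρ1])
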